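/- arXiv:1607.08492 — 4 statements merged into one kernel-verified Lean document; each statement's English description precedes it below -/
import Mathlib

section
/- Let 0 < a < 1, C' ≥ (a/2)^{1/(a−1)}, and let x, y, z > 0 satisfy z > C'(x + y). Then ∫_0^1 (x + p(y+z))^{a-1} dp ≤ (1/2)(x+y)^{a-1}. -/
open MeasureTheory Set

/-!
On `[0, 1]` we have `x + p (y + z) ≥ p (x + y + z)`, so for the negative exponent `a - 1` the
integral is at most `(x + y + z) ^ (a - 1) ∫₀¹ p ^ (a - 1) dp = (x + y + z) ^ (a - 1) / a`.
Since `x + y + z > C' (x + y)`, the choice of `C'` is exactly what makes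
`(x + y + z) ^ (a - 1) ≤ (a / 2) (x + y) ^ (a - 1)`.
-/

lemma integral_add_mul_rpow_le {x w r : ℝ} (hx : 0 < x) (hxw : 0 < x + w) (hr : -1 < r)
    (hr0 : r ≤ 0) :
    (∫ p in (0 : ℝ)..1, (x + p * w) ^ r) ≤ (x + w) ^ r / (r + 1) := by
  have hbase : ∀ p ∈ Icc (0 : ℝ) 1, p * (x + w) ≤ x + p * w := fun p hp => by
    nlinarith [hp.1, hp.2]
  have hpos : ∀ p ∈ Icc (0 : ℝ) 1, 0 < x + p * w := fun p hp => by
    nlinarith [mul_nonneg (sub_nonneg.2 hp.2) hx.le, mul_nonneg hp.1 hxw.le, mul_pos hx hxw]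
  have hint : IntervalIntegrable (fun p => (x + p * w) ^ r) volume 0 1 := by
    refine (ContinuousOn.rpow_const (by fun_prop) fun p hp => Or.inl ?_).intervalIntegrable
    rw [uIcc_of_le zero_le_one] at hp
    exact (hpos p hp).ne'
  calc (∫ p in (0 : ℝ)..1, (x + p * w) ^ r)
      ≤ ∫ p in (0 : ℝ)..1, p ^ r * (x + w) ^ r := by
        refine intervalIntegral.integral_mono_on_of_le_Ioo zero_le_one hint
          ((intervalIntegral.intervalIntegrable_rpow' hr).mul_const _) fun p hp => ?_
        rw [← Real.mul_rpow hp.1.le hxw.le]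
        exact Real.rpow_le_rpow_of_nonpos (by nlinarith [hp.1])
          (hbase p (Ioo_subset_Icc_self hp)) hr0
    _ = (x + w) ^ r / (r + 1) := by
        rw [intervalIntegral.integral_mul_const, integral_rpow (Or.inl hr), Real.one_rpow,
          Real.zero_rpow (by linarith), sub_zero, one_div_mul_eq_div]

lemma rpow_le_mul_rpow_of_rpow_inv_mul_le {c r t s : ℝ} (hc : 0 < c) (hr : r < 0) (ht : 0 < t)
    (hs : c ^ r⁻¹ * t ≤ s) : s ^ r ≤ c * t ^ r := by
  calc s ^ r ≤ (c ^ r⁻¹ * t) ^ r := Real.rpow_le_rpow_of_nonpos (by positivity) hs hr.le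
    _ = c * t ^ r := by
        rw [Real.mul_rpow (by positivity) ht.le, ← Real.rpow_mul hc.le, inv_mul_cancel₀ hr.ne,
          Real.rpow_one]

theorem stmt6_general (a C' x y z : ℝ) (ha : 0 < a) (ha1 : a < 1)
    (hC' : (a / 2) ^ (1 / (a - 1)) ≤ C')
    (hx : 0 < x) (hy : 0 < y) (hzC : C' * (x + y) < z) :
    (∫ p in (0:ℝ)..1, (x + p * (y + z)) ^ (a - 1)) ≤ (1 / 2) * (x + y) ^ (a - 1) := by
  have hxy : 0 < x + y := by positivity
  have hC'pos : 0 < C' := (Real.rpow_pos_of_pos (by positivity) _).trans_le hC'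
  have hbound : (x + (y + z)) ^ (a - 1) ≤ a / 2 * (x + y) ^ (a - 1) := by
    refine rpow_le_mul_rpow_of_rpow_inv_mul_le (by positivity) (by linarith) hxy ?_
    rw [← one_div]
    nlinarith [mul_le_mul_of_nonneg_right hC' hxy.le]
  calc (∫ p in (0:ℝ)..1, (x + p * (y + z)) ^ (a - 1))
      ≤ (x + (y + z)) ^ (a - 1) / (a - 1 + 1) :=
        integral_add_mul_rpow_le hx (by nlinarith) (by linarith) (by linarith)
    _ ≤ a / 2 * (x + y) ^ (a - 1) / a := by
        rw [sub_add_cancel]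
        exact div_le_div_of_nonneg_right hbound ha.le
    _ = 1 / 2 * (x + y) ^ (a - 1) := by field_simp

theorem stmt6 (a C' x y z : ℝ) (ha : 0 < a) (ha1 : a < 1)
    (hC' : (a / 2) ^ (1 / (a - 1)) ≤ C')
    (hx : 0 < x) (hy : 0 < y) (hz : 0 < z) (hzC : C' * (x + y) < z) :
    (∫ p in (0:ℝ)..1, (x + p * (y + z)) ^ (a - 1)) ≤ (1 / 2) * (x + y) ^ (a - 1) :=
  stmt6_general a C' x y z ha ha1 hC' hx hy hzC
end

section
/- Let 0 < a < 1 and E_1, ..., E_n > 0 (n ≥ 2). If E_1 ≥ (1/2)·∑_{i=2}^n E_i, then √(E_1) · ∫_0^1 (p·E_1 + ∑_{i=2}^n E_i)^{a-1} dp ≤ (2/a)·(∑_{i=1}^n E_i)^{a - 1/2}. -/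
/-!
Substituting `u = p x + s` turns the integral into `((x + s)^a - s^a) / (a x) ≤ (x + s)^a / (a x)`,
so `√x` times it is at most `(x + s)^a / (a √x)`. The hypothesis `s ≤ 2x` gives
`√(x + s) ≤ 2 √x`, and `(x + s)^a / √(x + s) = (x + s)^(a - 1/2)`.
-/

open Real

lemma integral_rpow_mul_add_sub_one {a x s : ℝ} (ha : 0 < a) (hx : 0 < x) :
    ∫ p in (0:ℝ)..1, (p * x + s) ^ (a - 1) = ((x + s) ^ a - s ^ a) / (a * x) := by
  have hcomp := intervalIntegral.integral_comp_mul_add (fun u : ℝ => u ^ (a - 1)) hx.ne' s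
    (a := 0) (b := 1)
  simp only [mul_zero, zero_add, mul_one, smul_eq_mul] at hcomp
  rw [integral_rpow (Or.inl (by linarith)), sub_add_cancel] at hcomp
  simp only [mul_comm _ x]
  rw [hcomp]
  field_simp

lemma sqrt_mul_integral_rpow_mul_add_le {a x s : ℝ} (ha : 0 < a) (hx : 0 < x) (hs : 0 ≤ s)
    (hsx : s ≤ 2 * x) :
    √x * ∫ p in (0:ℝ)..1, (p * x + s) ^ (a - 1) ≤ 2 / a * (x + s) ^ (a - 1 / 2) := by
  have hxs : 0 < x + s := by linarith
  have hsqrt : √(x + s) ≤ 2 * √x :=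
    sqrt_le_iff.2 ⟨by positivity, by rw [mul_pow, sq_sqrt hx.le]; linarith⟩
  have hpow : (x + s) ^ (a - 1 / 2) = (x + s) ^ a / √(x + s) := by
    rw [rpow_sub hxs, sqrt_eq_rpow]
  have hxsa : 0 < (x + s) ^ a := rpow_pos_of_pos hxs a
  rw [integral_rpow_mul_add_sub_one ha hx, hpow]
  calc √x * (((x + s) ^ a - s ^ a) / (a * x))
      ≤ √x * ((x + s) ^ a / (a * x)) := by
        gcongr
        exact sub_le_self _ (rpow_nonneg hs a)
    _ = (x + s) ^ a / (a * √x) := by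
        field_simp
        rw [sq_sqrt hx.le]
    _ ≤ 2 / a * ((x + s) ^ a / √(x + s)) := by
        rw [div_mul_div_comm, div_le_div_iff₀ (by positivity) (by positivity)]
        nlinarith [mul_le_mul_of_nonneg_left hsqrt (mul_pos hxsa ha).le]

theorem stmt8_general (a : ℝ) (ha : 0 < a) (n : ℕ) (hn : 2 ≤ n)
    (E : ℕ → ℝ) (hpos : ∀ i, 1 ≤ i → i ≤ n → 0 < E i)
    (h1 : (1 / 2) * ∑ i ∈ Finset.Icc 2 n, E i ≤ E 1) :
    Real.sqrt (E 1) *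
        ∫ p in (0:ℝ)..1, (p * E 1 + ∑ i ∈ Finset.Icc 2 n, E i) ^ (a - 1)
      ≤ (2 / a) * (∑ i ∈ Finset.Icc 1 n, E i) ^ (a - 1 / 2) := by
  have hE1 : 0 < E 1 := hpos 1 le_rfl (by omega)
  have hS : 0 ≤ ∑ i ∈ Finset.Icc 2 n, E i := Finset.sum_nonneg fun i hi => by
    rw [Finset.mem_Icc] at hi
    exact (hpos i (by omega) hi.2).le
  have hsplit : ∑ i ∈ Finset.Icc 1 n, E i = E 1 + ∑ i ∈ Finset.Icc 2 n, E i := by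
    rw [← Finset.insert_Icc_add_one_left_eq_Icc (by omega : 1 ≤ n)]
    exact Finset.sum_insert (by simp)
  rw [hsplit]
  exact sqrt_mul_integral_rpow_mul_add_le ha hE1 hS (by linarith)

theorem stmt8 (a : ℝ) (ha : 0 < a) (ha1 : a < 1) (n : ℕ) (hn : 2 ≤ n)
    (E : ℕ → ℝ) (hpos : ∀ i, 1 ≤ i → i ≤ n → 0 < E i)
    (h1 : (1 / 2) * ∑ i ∈ Finset.Icc 2 n, E i ≤ E 1) :
    Real.sqrt (E 1) *
        ∫ p in (0:ℝ)..1, (p * E 1 + ∑ i ∈ Finset.Icc 2 n, E i) ^ (a - 1)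
      ≤ (2 / a) * (∑ i ∈ Finset.Icc 1 n, E i) ^ (a - 1 / 2) :=
  stmt8_general a ha n hn E hpos h1
end

section
/- Let Ψ_n be a Markov chain on a measurable space (X, B) and let X = G ∪ B be a measurable partition. Let T_0 = 0 and T_{n+1} = inf{k > T_n : Ψ_k ∈ G} be the successive visit times to G, and set Ψ̂_n = Ψ_{T_n}. Suppose C ⊆ G, and: (i) there are constants α > 0 and ξ_1 ≥ 1 and a function ξ: X → [1,∞) with ξ ≤ ξ_1 on G, such that P[T_{n+1} − T_n > k | Ψ_{T_n}] ≤ ξ(Ψ_{T_n})·k^{−α} for all k ≥ 1; (ii) there are ω > 0 and a function η: X → (0,∞) such that P_x[τ̂_C > k] ≤ η(x)·e^{−ωk}, where τ̂_C = inf{n > 0 : Ψ̂_n ∈ C}. Then for every ε > 0 there is a constant c such that P_x[τ_C > n] ≤ c·(η(x) + ξ(x))·n^{−(α−ε)} for all x ∈ X and n ≥ 1, where τ_C = inf{n > 0 : Ψ_n ∈ C}. -/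
open MeasureTheory

/-!
If `τ_C > n`, then either the induced chain has not entered `C` within `m` steps, or `T_m > n`:
since `C ⊆ G`, every visit of the chain to `C` is a visit time `T_j`, so `τ_C ≤ T_{τ̂_C}`. The
first event has probability at most `η(x) e^{-ω₀ m}` by (ii). On the second, one of the first `m`
excursions `T_{j+1} - T_j` exceeds `n / m`; integrating (i), with `Ψ_{T_0} = x` and `Ψ_{T_j} ∈ G`
for `j ≥ 1`, this has probability at most `m ξ₁ ξ(x) (n / m)^{-α}`. Taking `m ≈ (α / ω₀) log n`
makes the first term at most `η(x) n^{-α}`, and since `log n ≤ n^δ / δ` the second one is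
`O(ξ(x) m^{1+α} n^{-α}) = O(ξ(x) n^{-(α-ε)})`.
-/

noncomputable section

variable {S : Type*}

def visitTime (G : Set S) : ℕ → (ℕ → S) → ℕ
  | 0, _ => 0
  | n + 1, ω => sInf {k | visitTime G n ω < k ∧ ω k ∈ G}

def inducedPath (G : Set S) (ω : ℕ → S) (n : ℕ) : S := ω (visitTime G n ω)

def VisitTimesFinite (G : Set S) (ω : ℕ → S) : Prop :=
  ∀ n, {k | visitTime G n ω < k ∧ ω k ∈ G}.Nonempty

-- `0` when `ω` never enters `C` after time `0`, since `sInf ∅ = 0`.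
def firstPassage (C : Set S) (ω : ℕ → S) : ℕ := sInf {n | 0 < n ∧ ω n ∈ C}

theorem eq_visitTime {G : Set S} {T : ℕ → (ℕ → S) → ℕ} (h0 : ∀ ω, T 0 ω = 0)
    (hsucc : ∀ n ω, T (n + 1) ω = sInf {k | T n ω < k ∧ ω k ∈ G}) : T = visitTime G := by
  funext n ω
  induction n with
  | zero => exact h0 ω
  | succ n ih => rw [hsucc, ih]; rfl

section Path

variable {G : Set S} {ω : ℕ → S}

theorem visitTime_lt_succ (hω : VisitTimesFinite G ω) (n : ℕ) :
    visitTime G n ω < visitTime G (n + 1) ω :=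
  (Nat.sInf_mem (hω n)).1

theorem inducedPath_succ_mem (hω : VisitTimesFinite G ω) (n : ℕ) :
    inducedPath G ω (n + 1) ∈ G :=
  (Nat.sInf_mem (hω n)).2

theorem strictMono_visitTime (hω : VisitTimesFinite G ω) :
    StrictMono (visitTime G · ω) :=
  strictMono_nat_of_lt_succ (visitTime_lt_succ hω)

theorem exists_visitTime_eq (hω : VisitTimesFinite G ω)
    {q : ℕ} (hq : 0 < q) (hqG : ω q ∈ G) : ∃ j, 0 < j ∧ visitTime G j ω = q := by
  have hex : ∃ i, q ≤ visitTime G (i + 1) ω :=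
    ⟨q, (le_add_right le_rfl).trans (strictMono_visitTime hω).le_apply⟩
  obtain ⟨i, hqi, hmin⟩ : ∃ i, q ≤ visitTime G (i + 1) ω ∧ ∀ i' < i, visitTime G (i' + 1) ω < q :=
    ⟨Nat.find hex, Nat.find_spec hex, fun i' hi' => not_le.1 (Nat.find_min hex hi')⟩
  have hbefore : visitTime G i ω < q := by
    cases i with
    | zero => exact hq
    | succ i' => exact hmin i' i'.lt_succ_self
  refine ⟨i + 1, i.succ_pos, le_antisymm ?_ hqi⟩
  exact Nat.sInf_le ⟨hbefore, hqG⟩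

theorem firstPassage_le_visitTime_firstPassage {C : Set S} (hCG : C ⊆ G)
    (hω : VisitTimesFinite G ω) :
    firstPassage C ω ≤ visitTime G (firstPassage C (inducedPath G ω)) ω := by
  by_cases h : {n | 0 < n ∧ inducedPath G ω n ∈ C}.Nonempty
  · obtain ⟨hpos, hmem⟩ := Nat.sInf_mem h
    exact Nat.sInf_le ⟨hpos.trans_le (strictMono_visitTime hω).le_apply, hmem⟩
  · have hnever : {n | 0 < n ∧ ω n ∈ C} = ∅ := by
      refine Set.eq_empty_of_forall_notMem fun q ⟨hq, hqC⟩ => h ?_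
      obtain ⟨j, hj, hjq⟩ := exists_visitTime_eq hω hq (hCG hqC)
      exact ⟨j, hj, by rwa [inducedPath, hjq]⟩
    simp only [firstPassage, hnever, Nat.sInf_empty, zero_le]

end Path

section Measurability

theorem measurable_nat_sInf {α : Type*} [MeasurableSpace α] {p : α → ℕ → Prop}
    (hp : ∀ k, MeasurableSet {x | p x k}) : Measurable fun x => sInf {k | p x k} := by
  classical
  have hex : ∀ x, ∃ k, p x k ∨ ∀ j, ¬ p x j := fun x =>
    (em (∃ k, p x k)).elim (fun ⟨k, hk⟩ => ⟨k, .inl hk⟩) fun h => ⟨0, .inr (not_exists.1 h)⟩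
  have hmeas : ∀ k, MeasurableSet {x | p x k ∨ ∀ j, ¬ p x j} := fun k => by
    simpa only [Set.ofPred_or, Set.ofPred_forall, ← Set.compl_ofPred] using
      (hp k).union (.iInter fun j => (hp j).compl)
  convert measurable_find hex hmeas using 2 with x
  by_cases h : {k | p x k}.Nonempty
  · rw [Nat.sInf_def h]
    refine le_antisymm (Nat.find_min' h ?_) (Nat.find_mono fun k => .inl)
    exact (Nat.find_spec (hex x)).resolve_right fun h' => h' _ (Nat.find_spec h)
  · rw [Set.not_nonempty_iff_eq_empty.1 h, Nat.sInf_empty, eq_comm, Nat.find_eq_zero]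
    exact .inr fun j hj => h ⟨j, hj⟩

theorem Measurable.apply_at {ι : Type*} [Countable ι] [MeasurableSpace ι]
    [MeasurableSingletonClass ι] [MeasurableSpace S] {τ : (ι → S) → ι} (hτ : Measurable τ) :
    Measurable fun ω : ι → S => ω (τ ω) :=
  (measurable_from_prod_countable_right (f := fun p : ι × (ι → S) => p.2 p.1)
    fun k => measurable_pi_apply k).comp (hτ.prodMk measurable_id)

variable [MeasurableSpace S] {G : Set S}

theorem measurable_visitTime (hG : MeasurableSet G) (n : ℕ) : Measurable (visitTime G n) := by
  induction n with
  | zero => exact measurable_const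
  | succ n ih =>
    exact measurable_nat_sInf fun k =>
      (measurableSet_lt ih measurable_const).inter (measurable_pi_apply k hG)

theorem measurable_inducedPath (hG : MeasurableSet G) (n : ℕ) :
    Measurable fun ω => inducedPath G ω n :=
  (measurable_visitTime hG n).apply_at

end Measurability

section Probability

-- `s` need not be measurable: this is how `P x {ω | ω 0 = x} = 1` is used when the singletons
-- of the state space are not measurable.
theorem ae_of_ae_imp_of_measure_eq_one {Ω : Type*} [MeasurableSpace Ω] {μ : Measure Ω}
    [IsProbabilityMeasure μ] {s : Set Ω} {p : Ω → Prop} (hs : μ s = 1)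
    (hp : MeasurableSet {ω | p ω}) (h : ∀ᵐ ω ∂μ, ω ∈ s → p ω) : ∀ᵐ ω ∂μ, p ω :=
  ae_iff.2 <| (prob_compl_eq_zero_iff hp).2 <| le_antisymm prob_le_one (hs ▸ measure_mono_ae h)

theorem measure_le_of_condExp_indicator_le {Ω : Type*} {m m0 : MeasurableSpace Ω}
    {μ : Measure Ω} [IsProbabilityMeasure μ] (hm : m ≤ m0) {A : Set Ω} (hA : MeasurableSet A)
    {c : ℝ} (h : ∀ᵐ ω ∂μ, μ[A.indicator (fun _ => (1 : ℝ)) | m] ω ≤ c) :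
    μ A ≤ ENNReal.ofReal c := by
  rw [← ofReal_measureReal]
  refine ENNReal.ofReal_le_ofReal ?_
  calc μ.real A = ∫ ω, A.indicator (fun _ => (1 : ℝ)) ω ∂μ := (integral_indicator_one hA).symm
    _ = ∫ ω, μ[A.indicator (fun _ => (1 : ℝ)) | m] ω ∂μ := (integral_condExp hm).symm
    _ ≤ ∫ _, c ∂μ := integral_mono_ae integrable_condExp (integrable_const c) h
    _ = c := by simp

theorem le_add_mul_of_forall_sub_le {f : ℕ → ℕ} {k m : ℕ} (h : ∀ j < m, f (j + 1) - f j ≤ k) :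
    f m ≤ f 0 + m * k := by
  induction m with
  | zero => simp
  | succ m ih =>
    have := ih fun j hj => h j (by omega)
    have := h m (by omega)
    rw [Nat.succ_mul]
    omega

theorem measure_mul_lt_le_of_forall_sub {Ω : Type*} [MeasurableSpace Ω] (μ : Measure Ω)
    {f : ℕ → Ω → ℕ} (hf0 : ∀ ω, f 0 ω = 0) (m k : ℕ) {c : ENNReal}
    (hc : ∀ j, μ {ω | k < f (j + 1) ω - f j ω} ≤ c) : μ {ω | m * k < f m ω} ≤ m * c := by
  calc μ {ω | m * k < f m ω}
      ≤ μ (⋃ j ∈ Finset.range m, {ω | k < f (j + 1) ω - f j ω}) := by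
        refine measure_mono fun ω hω => ?_
        by_contra hsmall
        simp only [Set.mem_iUnion, Finset.mem_range, Set.mem_ofPred_eq, not_exists, not_lt]
          at hsmall
        have := le_add_mul_of_forall_sub_le (f := (f · ω)) hsmall
        simp only [hf0, zero_add] at this
        exact not_lt.2 this hω
    _ ≤ ∑ j ∈ Finset.range m, μ {ω | k < f (j + 1) ω - f j ω} := measure_biUnion_finset_le _ _
    _ ≤ ∑ _j ∈ Finset.range m, c := Finset.sum_le_sum fun j _ => hc j
    _ = m * c := by simp

variable [MeasurableSpace S] {G C : Set S} {μ : Measure (ℕ → S)}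

theorem measure_lt_firstPassage_le (hCG : C ⊆ G)
    (hμ : ∀ᵐ ω ∂μ, VisitTimesFinite G ω) (m n : ℕ) :
    μ {ω | n < firstPassage C ω} ≤
      μ {ω | m < firstPassage C (inducedPath G ω)} + μ {ω | n < visitTime G m ω} := by
  refine (measure_mono_ae ?_).trans (measure_union_le _ _)
  filter_upwards [hμ] with ω hω (hlt : n < firstPassage C ω)
  show m < firstPassage C (inducedPath G ω) ∨ n < visitTime G m ω
  refine or_iff_not_imp_left.2 fun hhat => hlt.trans_le ?_
  exact (firstPassage_le_visitTime_firstPassage hCG hω).trans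
    ((strictMono_visitTime hω).monotone (not_lt.1 hhat))

theorem measure_visitTime_sub_gt_le (hG : MeasurableSet G) [IsProbabilityMeasure μ] {x : S}
    (hx : μ {ω | ω 0 = x} = 1) (hμ : ∀ᵐ ω ∂μ, VisitTimesFinite G ω)
    {ξ : S → ℝ} {ξ1 : ℝ} (hξ : ∀ y, 1 ≤ ξ y) (hξ1 : 1 ≤ ξ1) (hξG : ∀ y ∈ G, ξ y ≤ ξ1)
    {k : ℕ} {b : ℝ} (hb : 0 ≤ b)
    (hcond : ∀ n, ∀ᵐ ω ∂μ,
      μ[{ω' | k < visitTime G (n + 1) ω' - visitTime G n ω'}.indicator (fun _ => (1 : ℝ)) |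
        MeasurableSpace.comap (fun ω' => inducedPath G ω' n) inferInstance] ω
        ≤ ξ (inducedPath G ω n) * b) (n : ℕ) :
    μ {ω | k < visitTime G (n + 1) ω - visitTime G n ω} ≤ ENNReal.ofReal (ξ1 * ξ x * b) := by
  have hA : MeasurableSet {ω | k < visitTime G (n + 1) ω - visitTime G n ω} :=
    measurableSet_lt measurable_const
      ((measurable_visitTime hG _).sub (measurable_visitTime hG _))
  have hm := (measurable_inducedPath hG n).comap_le
  refine measure_le_of_condExp_indicator_le hm hA <|
    ae_of_ae_imp_of_measure_eq_one (s := {ω | ξ (inducedPath G ω n) ≤ ξ1 * ξ x}) ?_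
      (measurableSet_le (stronglyMeasurable_condExp.mono hm).measurable measurable_const) ?_
  · refine le_antisymm prob_le_one ?_
    cases n with
    | zero =>
      refine hx ▸ measure_mono fun ω (hω : ω 0 = x) => ?_
      show ξ (ω 0) ≤ ξ1 * ξ x
      rw [hω]
      exact le_mul_of_one_le_left (zero_le_one.trans (hξ x)) hξ1
    | succ n =>
      refine measure_univ (μ := μ) ▸ measure_mono_ae ?_
      filter_upwards [hμ] with ω hω _
      exact (hξG _ (inducedPath_succ_mem hω n)).trans
        (le_mul_of_one_le_right (zero_le_one.trans hξ1) (hξ x))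
  · filter_upwards [hcond n] with ω hω hs
    exact hω.trans (mul_le_mul_of_nonneg_right hs hb)

theorem measure_lt_visitTime_le (hG : MeasurableSet G) [IsProbabilityMeasure μ] {x : S}
    (hx : μ {ω | ω 0 = x} = 1) (hμ : ∀ᵐ ω ∂μ, VisitTimesFinite G ω)
    {ξ : S → ℝ} {ξ1 : ℝ} (hξ : ∀ y, 1 ≤ ξ y) (hξ1 : 1 ≤ ξ1) (hξG : ∀ y ∈ G, ξ y ≤ ξ1)
    {m n : ℕ} {b : ℝ} (hb : 0 ≤ b)
    (hcond : ∀ j, ∀ᵐ ω ∂μ,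
      μ[{ω' | n / m < visitTime G (j + 1) ω' - visitTime G j ω'}.indicator (fun _ => (1 : ℝ)) |
        MeasurableSpace.comap (fun ω' => inducedPath G ω' j) inferInstance] ω
        ≤ ξ (inducedPath G ω j) * b) :
    μ {ω | n < visitTime G m ω} ≤ ENNReal.ofReal (m * (ξ1 * ξ x * b)) := by
  rw [ENNReal.ofReal_mul (Nat.cast_nonneg m), ENNReal.ofReal_natCast]
  exact (measure_mono fun ω (h : n < _) => (Nat.mul_div_le n m).trans_lt h).trans <|
    measure_mul_lt_le_of_forall_sub _ (fun _ => rfl) m (n / m) <|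
      measure_visitTime_sub_gt_le hG hx hμ hξ hξ1 hξG hb hcond

end Probability

section Asymptotics

-- With `a = α / ω₀` this makes `exp (-ω₀ m) ≤ n^{-α}`, while `m = O(n^δ)` for every `δ > 0`.
def cutLength (a : ℝ) (n : ℕ) : ℕ := ⌈a * Real.log n⌉₊ + 1

-- `cutLength (α / ω0) n ≤ K n^δ` with `δ = ε / (1 + α)`, so that `m^{1+α} ≤ K^{1+α} n^ε`.
def cutConst (α ω0 ε : ℝ) : ℝ := α / ω0 / (ε / (1 + α)) + 2

def tailConst (α ω0 ε ξ1 : ℝ) : ℝ := 2 ^ α * ξ1 * cutConst α ω0 ε ^ (1 + α)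

variable {α ω0 ε : ℝ} {n : ℕ}

theorem exp_neg_mul_cutLength_le (hω0 : 0 < ω0) (hn : 0 < n) :
    Real.exp (-ω0 * cutLength (α / ω0) n) ≤ (n : ℝ) ^ (-α) := by
  rw [Real.rpow_def_of_pos (Nat.cast_pos.2 hn), Real.exp_le_exp]
  have hcut : α / ω0 * Real.log n ≤ cutLength (α / ω0) n := by
    rw [cutLength]; push_cast; linarith [Nat.le_ceil (α / ω0 * Real.log n)]
  have := mul_le_mul_of_nonneg_left hcut hω0.le
  rw [← mul_assoc, mul_div_cancel₀ _ hω0.ne'] at this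
  linarith

theorem cutLength_le {a δ : ℝ} (ha : 0 ≤ a) (hδ : 0 < δ) (hn : 0 < n) :
    (cutLength a n : ℝ) ≤ (a / δ + 2) * (n : ℝ) ^ δ := by
  have hn1 : (1 : ℝ) ≤ n := by exact_mod_cast hn
  have hlog : 0 ≤ a * Real.log n := mul_nonneg ha (Real.log_nonneg hn1)
  have hpow : (1 : ℝ) ≤ (n : ℝ) ^ δ := Real.one_le_rpow hn1 hδ.le
  have hceil : (cutLength a n : ℝ) < a * Real.log n + 2 := by
    rw [cutLength]; push_cast; linarith [Nat.ceil_lt_add_one hlog]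
  have hlog_le : a * Real.log n ≤ a / δ * (n : ℝ) ^ δ := by
    calc a * Real.log n ≤ a * ((n : ℝ) ^ δ / δ) :=
          mul_le_mul_of_nonneg_left (Real.log_le_rpow_div n.cast_nonneg hδ) ha
      _ = a / δ * (n : ℝ) ^ δ := by ring
  nlinarith

theorem rpow_one_add_mul_rpow_neg_le {m K y : ℝ} (hm : 0 ≤ m) (hy : 0 < y) (hα : 0 ≤ α)
    (h : m ≤ K * y ^ (ε / (1 + α))) : m ^ (1 + α) * y ^ (-α) ≤ K ^ (1 + α) * y ^ (-(α - ε)) := by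
  have hK : 0 ≤ K := nonneg_of_mul_nonneg_left (hm.trans h) (by positivity)
  calc m ^ (1 + α) * y ^ (-α) ≤ (K * y ^ (ε / (1 + α))) ^ (1 + α) * y ^ (-α) := by gcongr
    _ = K ^ (1 + α) * y ^ (-(α - ε)) := by
      rw [Real.mul_rpow hK (by positivity), ← Real.rpow_mul hy.le,
        div_mul_cancel₀ _ (by positivity), mul_assoc, ← Real.rpow_add hy]
      ring_nf

theorem cutLength_rpow_mul_rpow_neg_le (hα : 0 ≤ α) (hω0 : 0 < ω0) (hε : 0 < ε) (hn : 0 < n) :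
    (cutLength (α / ω0) n : ℝ) ^ (1 + α) * (n : ℝ) ^ (-α) ≤
      cutConst α ω0 ε ^ (1 + α) * (n : ℝ) ^ (-(α - ε)) :=
  rpow_one_add_mul_rpow_neg_le (Nat.cast_nonneg _) (by positivity) hα
    (cutLength_le (by positivity) (by positivity) hn)

theorem natDiv_rpow_neg_le {m : ℕ} (hm : 0 < m) (hmn : m ≤ n) (hα : 0 ≤ α) :
    ((n / m : ℕ) : ℝ) ^ (-α) ≤ (2 * m) ^ α * (n : ℝ) ^ (-α) := by
  have hn : 0 < n := hm.trans_le hmn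
  have hdiv : (n : ℝ) / (2 * m) ≤ (n / m : ℕ) := by
    have h1 := Nat.lt_mul_div_succ n hm
    have h2 := Nat.div_pos hmn hm
    have : n ≤ n / m * (2 * m) := by nlinarith
    rw [div_le_iff₀ (by positivity)]
    exact_mod_cast this
  calc ((n / m : ℕ) : ℝ) ^ (-α) ≤ ((n : ℝ) / (2 * m)) ^ (-α) :=
        Real.rpow_le_rpow_of_nonpos (by positivity) hdiv (by linarith)
    _ = (2 * m) ^ α * (n : ℝ) ^ (-α) := by
      rw [Real.div_rpow (by positivity) (by positivity), Real.rpow_neg (x := 2 * m) (by positivity),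
        div_inv_eq_mul, mul_comm]

theorem one_le_rpow_one_add_mul_rpow_neg {x y : ℝ} (hx : 1 ≤ x) (hxy : x ≤ y) (hα : 0 ≤ α) :
    1 ≤ y ^ (1 + α) * x ^ (-α) := by
  calc 1 ≤ x := hx
    _ = x ^ (1 + α) * x ^ (-α) := by rw [← Real.rpow_add (by linarith)]; simp
    _ ≤ y ^ (1 + α) * x ^ (-α) := by gcongr

variable {ξ1 η ξ : ℝ}

theorem two_le_cutConst (hα : 0 ≤ α) (hω0 : 0 ≤ ω0) (hε : 0 ≤ ε) : 2 ≤ cutConst α ω0 ε := by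
  rw [cutConst]
  linarith [show 0 ≤ α / ω0 / (ε / (1 + α)) by positivity]

theorem cutConst_rpow_le_tailConst (hα : 0 ≤ α) (hω0 : 0 ≤ ω0) (hε : 0 ≤ ε) (hξ1 : 1 ≤ ξ1) :
    cutConst α ω0 ε ^ (1 + α) ≤ tailConst α ω0 ε ξ1 :=
  le_mul_of_one_le_left (Real.rpow_nonneg (zero_le_two.trans (two_le_cutConst hα hω0 hε)) _)
    (one_le_mul_of_one_le_of_one_le (Real.one_le_rpow one_le_two hα) hξ1)

theorem one_le_tailConst (hα : 0 ≤ α) (hω0 : 0 ≤ ω0) (hε : 0 ≤ ε) (hξ1 : 1 ≤ ξ1) :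
    1 ≤ tailConst α ω0 ε ξ1 :=
  (Real.one_le_rpow (one_le_two.trans (two_le_cutConst hα hω0 hε)) (by linarith)).trans
    (cutConst_rpow_le_tailConst hα hω0 hε hξ1)

theorem one_le_tailConst_mul_of_lt_cutLength (hα : 0 < α) (hω0 : 0 < ω0) (hε : 0 < ε)
    (hξ1 : 1 ≤ ξ1) (hη : 0 ≤ η) (hξ : 1 ≤ ξ) (hn : 0 < n) (hnm : n < cutLength (α / ω0) n) :
    1 ≤ tailConst α ω0 ε ξ1 * (η + ξ) * (n : ℝ) ^ (-(α - ε)) := by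
  calc 1 ≤ (cutLength (α / ω0) n : ℝ) ^ (1 + α) * (n : ℝ) ^ (-α) :=
        one_le_rpow_one_add_mul_rpow_neg (by exact_mod_cast hn) (by exact_mod_cast hnm.le) hα.le
    _ ≤ cutConst α ω0 ε ^ (1 + α) * (n : ℝ) ^ (-(α - ε)) :=
        cutLength_rpow_mul_rpow_neg_le hα.le hω0 hε hn
    _ ≤ tailConst α ω0 ε ξ1 * 1 * (n : ℝ) ^ (-(α - ε)) := by
        rw [mul_one]
        gcongr
        exact cutConst_rpow_le_tailConst hα.le hω0.le hε.le hξ1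
    _ ≤ tailConst α ω0 ε ξ1 * (η + ξ) * (n : ℝ) ^ (-(α - ε)) := by
        have := one_le_tailConst hα.le hω0.le hε.le hξ1
        gcongr
        linarith

theorem tail_le_tailConst_mul_of_cutLength_le (hα : 0 < α) (hω0 : 0 < ω0) (hε : 0 < ε)
    (hξ1 : 1 ≤ ξ1) (hη : 0 ≤ η) (hξ : 0 ≤ ξ) (hn : 0 < n) (hmn : cutLength (α / ω0) n ≤ n) :
    η * Real.exp (-ω0 * cutLength (α / ω0) n) +
      cutLength (α / ω0) n * (ξ1 * ξ * ((n / cutLength (α / ω0) n : ℕ) : ℝ) ^ (-α)) ≤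
    tailConst α ω0 ε ξ1 * (η + ξ) * (n : ℝ) ^ (-(α - ε)) := by
  set m := cutLength (α / ω0) n
  have hm : (0 : ℝ) < m := Nat.cast_pos.2 (Nat.succ_pos _)
  have hnα : (n : ℝ) ^ (-α) ≤ (n : ℝ) ^ (-(α - ε)) :=
    Real.rpow_le_rpow_of_exponent_le (by exact_mod_cast hn) (by linarith)
  have hC := one_le_tailConst hα.le hω0.le hε.le hξ1
  have hr : 0 ≤ (n : ℝ) ^ (-(α - ε)) := by positivity
  calc η * Real.exp (-ω0 * m) + m * (ξ1 * ξ * ((n / m : ℕ) : ℝ) ^ (-α))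
      ≤ η * (n : ℝ) ^ (-α) + m * (ξ1 * ξ * ((2 * m) ^ α * (n : ℝ) ^ (-α))) := by
        gcongr
        · exact exp_neg_mul_cutLength_le hω0 hn
        · exact natDiv_rpow_neg_le (by exact_mod_cast hm) hmn hα.le
    _ = η * (n : ℝ) ^ (-α) + 2 ^ α * ξ1 * ξ * ((m : ℝ) ^ (1 + α) * (n : ℝ) ^ (-α)) := by
        rw [Real.mul_rpow zero_le_two hm.le, Real.rpow_add hm, Real.rpow_one]
        ring
    _ ≤ η * (n : ℝ) ^ (-(α - ε)) +
          2 ^ α * ξ1 * ξ * (cutConst α ω0 ε ^ (1 + α) * (n : ℝ) ^ (-(α - ε))) := by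
        gcongr ?_ + _ * ?_
        · exact mul_le_mul_of_nonneg_left hnα hη
        · exact cutLength_rpow_mul_rpow_neg_le hα.le hω0 hε hn
    _ = η * (n : ℝ) ^ (-(α - ε)) + tailConst α ω0 ε ξ1 * ξ * (n : ℝ) ^ (-(α - ε)) := by
        rw [tailConst]
        ring
    _ ≤ tailConst α ω0 ε ξ1 * (η + ξ) * (n : ℝ) ^ (-(α - ε)) := by
        nlinarith [mul_nonneg (mul_nonneg (sub_nonneg.2 hC) hη) hr]

end Asymptotics

end

/-- The chain is modelled on path space: `P x` is the law of the chain started at `x`. -/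
theorem stmt14_general {S : Type*} [MeasurableSpace S]
    (P : S → Measure (ℕ → S)) (hP : ∀ x, IsProbabilityMeasure (P x))
    (hstart : ∀ x, P x {ω | ω 0 = x} = 1)
    (G C : Set S) (hG : MeasurableSet G) (hCG : C ⊆ G)
    -- successive visit times to `G`
    (T : ℕ → (ℕ → S) → ℕ)
    (hT0 : ∀ ω, T 0 ω = 0)
    (hTsucc : ∀ n ω, T (n + 1) ω = sInf {k | T n ω < k ∧ ω k ∈ G})
    (hTfin : ∀ x n, ∀ᵐ ω ∂(P x), {k | T n ω < k ∧ ω k ∈ G}.Nonempty)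
    -- first passage times of the original and the induced chain
    (τC τhatC : (ℕ → S) → ℕ)
    (hτC : ∀ ω, τC ω = sInf {n | 0 < n ∧ ω n ∈ C})
    (hτhatC : ∀ ω, τhatC ω = sInf {n | 0 < n ∧ ω (T n ω) ∈ C})
    (α : ℝ) (hα : 0 < α) (ξ : S → ℝ) (hξ1 : ∀ y, 1 ≤ ξ y)
    (ξ1 : ℝ) (hξ1' : 1 ≤ ξ1) (hξG : ∀ y ∈ G, ξ y ≤ ξ1)
    -- hypothesis (i): conditionally on `Ψ_{T_n}`, the waiting time `T_{n+1} - T_n`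
    -- has a polynomial tail
    (hi : ∀ x : S, ∀ n k : ℕ, 1 ≤ k →
      ∀ᵐ ω ∂(P x),
        (MeasureTheory.condExp
            (MeasurableSpace.comap (fun ω' : ℕ → S => ω' (T n ω')) inferInstance) (P x)
            (fun ω' => Set.indicator {ω'' | k < T (n + 1) ω'' - T n ω''}
              (fun _ => (1:ℝ)) ω')) ω
          ≤ ξ (ω (T n ω)) * (k : ℝ) ^ (-α))
    (ω0 : ℝ) (hω0 : 0 < ω0) (η : S → ℝ) (hη : ∀ x, 0 < η x)
    -- hypothesis (ii): the first passage time of the induced chain has an exponential tail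
    (hii : ∀ x : S, ∀ k : ℕ,
      P x {ω | k < τhatC ω} ≤ ENNReal.ofReal (η x * Real.exp (-ω0 * k))) :
    ∀ ε : ℝ, 0 < ε → ∃ c : ℝ, 0 < c ∧
      ∀ x : S, ∀ n : ℕ, 1 ≤ n →
        P x {ω | n < τC ω} ≤ ENNReal.ofReal (c * (η x + ξ x) * (n : ℝ) ^ (-(α - ε))) := by
  obtain rfl := eq_visitTime hT0 hTsucc
  obtain rfl : τC = firstPassage C := funext hτC
  obtain rfl : τhatC = fun ω => firstPassage C (inducedPath G ω) := funext hτhatC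
  intro ε hε
  refine ⟨tailConst α ω0 ε ξ1, one_pos.trans_le (one_le_tailConst hα.le hω0.le hε.le hξ1'),
    fun x n hn => ?_⟩
  have hμ := ae_all_iff.2 (hTfin x)
  set m := cutLength (α / ω0) n
  rcases lt_or_ge n m with hnm | hmn
  · exact prob_le_one.trans <| ENNReal.one_le_ofReal.2 <|
      one_le_tailConst_mul_of_lt_cutLength hα hω0 hε hξ1' (hη x).le (hξ1 x) hn hnm
  have hk : 1 ≤ n / m := (Nat.one_le_div_iff (Nat.succ_pos _)).2 hmn
  have hηx := (hη x).le
  have hξx := zero_le_one.trans (hξ1 x)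
  calc P x {ω | n < firstPassage C ω}
      ≤ P x {ω | m < firstPassage C (inducedPath G ω)} + P x {ω | n < visitTime G m ω} :=
        measure_lt_firstPassage_le hCG hμ m n
    _ ≤ ENNReal.ofReal (η x * Real.exp (-ω0 * m)) +
          ENNReal.ofReal (m * (ξ1 * ξ x * ((n / m : ℕ) : ℝ) ^ (-α))) :=
        add_le_add (hii x m) <| measure_lt_visitTime_le hG (hstart x) hμ hξ1 hξ1' hξG
          (by positivity) fun j => hi x j _ hk
    _ = ENNReal.ofReal (η x * Real.exp (-ω0 * m) + m * (ξ1 * ξ x * ((n / m : ℕ) : ℝ) ^ (-α))) :=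
        (ENNReal.ofReal_add (by positivity) (by positivity)).symm
    _ ≤ _ := ENNReal.ofReal_le_ofReal <|
        tail_le_tailConst_mul_of_cutLength_le hα hω0 hε hξ1' hηx hξx hn hmn

/-- The induced-chain method (Theorem 3.6 of the paper).  The Markov chain is modelled
canonically on path space: for each starting point `x`, `P x` is the law of the chain
started at `x`, the Markov property being expressed through conditional expectations of
shifted paths.  `T n` are the successive visit times to the "good set" `G`, `τC` and
`τhatC` are the first passage times to `C ⊆ G` of the original and the induced chain. -/
theorem stmt14 {S : Type*} [MeasurableSpace S]
    (P : S → Measure (ℕ → S)) (hP : ∀ x, IsProbabilityMeasure (P x))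
    (hstart : ∀ x, P x {ω | ω 0 = x} = 1)
    -- time-homogeneous Markov property: conditionally on the position at time `n`,
    -- the law of the shifted path is that of the chain restarted there
    (hMarkov : ∀ x : S, ∀ n : ℕ, ∀ B : Set (ℕ → S), MeasurableSet B →
      ∀ᵐ ω ∂(P x),
        (MeasureTheory.condExp (MeasurableSpace.comap (fun ω' : ℕ → S => ω' n) inferInstance)
            (P x) (fun ω' => Set.indicator B (fun _ => (1:ℝ)) (fun k => ω' (n + k)))) ω
          = ((P (ω n)) B).toReal)
    (G C : Set S) (hG : MeasurableSet G) (hC : MeasurableSet C) (hCG : C ⊆ G)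
    -- successive visit times to `G`
    (T : ℕ → (ℕ → S) → ℕ)
    (hT0 : ∀ ω, T 0 ω = 0)
    (hTsucc : ∀ n ω, T (n + 1) ω = sInf {k | T n ω < k ∧ ω k ∈ G})
    (hTfin : ∀ x n, ∀ᵐ ω ∂(P x), {k | T n ω < k ∧ ω k ∈ G}.Nonempty)
    -- first passage times of the original and the induced chain
    (τC τhatC : (ℕ → S) → ℕ)
    (hτC : ∀ ω, τC ω = sInf {n | 0 < n ∧ ω n ∈ C})
    (hτhatC : ∀ ω, τhatC ω = sInf {n | 0 < n ∧ ω (T n ω) ∈ C})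
    (α : ℝ) (hα : 0 < α) (ξ : S → ℝ) (hξ1 : ∀ y, 1 ≤ ξ y)
    (ξ1 : ℝ) (hξ1' : 1 ≤ ξ1) (hξG : ∀ y ∈ G, ξ y ≤ ξ1)
    -- hypothesis (i): conditionally on `Ψ_{T_n}`, the waiting time `T_{n+1} - T_n`
    -- has a polynomial tail
    (hi : ∀ x : S, ∀ n k : ℕ, 1 ≤ k →
      ∀ᵐ ω ∂(P x),
        (MeasureTheory.condExp
            (MeasurableSpace.comap (fun ω' : ℕ → S => ω' (T n ω')) inferInstance) (P x)
            (fun ω' => Set.indicator {ω'' | k < T (n + 1) ω'' - T n ω''}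
              (fun _ => (1:ℝ)) ω')) ω
          ≤ ξ (ω (T n ω)) * (k : ℝ) ^ (-α))
    (ω0 : ℝ) (hω0 : 0 < ω0) (η : S → ℝ) (hη : ∀ x, 0 < η x)
    -- hypothesis (ii): the first passage time of the induced chain has an exponential tail
    (hii : ∀ x : S, ∀ k : ℕ,
      P x {ω | k < τhatC ω} ≤ ENNReal.ofReal (η x * Real.exp (-ω0 * k))) :
    ∀ ε : ℝ, 0 < ε → ∃ c : ℝ, 0 < c ∧
      ∀ x : S, ∀ n : ℕ, 1 ≤ n →
        P x {ω | n < τC ω} ≤ ENNReal.ofReal (c * (η x + ξ x) * (n : ℝ) ^ (-(α - ε))) :=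
  stmt14_general P hP hstart G C hG hCG T hT0 hTsucc hTfin τC τhatC hτC hτhatC α hα ξ hξ1 ξ1 hξ1'
    hξG hi ω0 hω0 η hη hii
end

section
/- Let 0 < a < 1 and x, y > 0 with y ≤ C'x for a constant C' ≥ 1, and z > C'(x+y). Then (x+y)^{a−1} − ∫_0^1 (x + p(y+z))^{a−1} dp ≥ (1/2)(x+y)^{a−1} ≥ (1/(2(1+C')))·x^{a−1}, provided C' ≥ (a/2)^{1/(a−1)}. -/
/-!
Substituting `u = x + p (y + z)` computes the integral as `((x + y + z)^a - x^a) / (a (y + z))`,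
which by subadditivity of `t ↦ t^a` is at most `(y + z)^(a-1) / a`. Since `y + z > C' (x + y)` and
`t ↦ t^(a-1)` is decreasing, this is at most `C'^(a-1) (x + y)^(a-1) / a`, and the choice of `C'`
makes `C'^(a-1) ≤ a / 2`. The lower bound by `x^(a-1)` is monotonicity again, using `x + y ≤ (1 + C') x`.
-/

open Real

lemma integral_rpow_add_mul {r x s : ℝ} (hr : -1 < r) (hs : s ≠ 0) :
    ∫ p in (0 : ℝ)..1, (x + p * s) ^ r = ((x + s) ^ (r + 1) - x ^ (r + 1)) / ((r + 1) * s) := by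
  have hcomp : ∫ p in (0 : ℝ)..1, (x + p * s) ^ r = ∫ p in (0 : ℝ)..1, (s * p + x) ^ r := by
    congr 1; ext p; ring_nf
  rw [hcomp, intervalIntegral.integral_comp_mul_add (fun u => u ^ r) hs x, integral_rpow (Or.inl hr)]
  simp only [mul_zero, mul_one, zero_add, smul_eq_mul]
  field_simp
  ring_nf

lemma integral_rpow_sub_one_add_mul_le {a x s : ℝ} (ha : 0 < a) (ha1 : a ≤ 1) (hx : 0 ≤ x)
    (hs : 0 < s) :
    ∫ p in (0 : ℝ)..1, (x + p * s) ^ (a - 1) ≤ s ^ (a - 1) / a := by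
  rw [integral_rpow_add_mul (by linarith) hs.ne', sub_add_cancel,
    rpow_sub hs, rpow_one, div_div, mul_comm s]
  gcongr
  linarith [rpow_add_le_add_rpow hx hs.le ha.le ha1]

lemma inv_one_add_mul_rpow_le_rpow_add {e C x y : ℝ} (he : -1 ≤ e) (he0 : e ≤ 0) (hC : 0 ≤ C)
    (hx : 0 < x) (hy : 0 ≤ y) (hyx : y ≤ C * x) :
    (1 + C)⁻¹ * x ^ e ≤ (x + y) ^ e := by
  have hC1 : 1 ≤ 1 + C := by linarith
  calc (1 + C)⁻¹ * x ^ e = (1 + C) ^ (-1 : ℝ) * x ^ e := by rw [rpow_neg_one]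
    _ ≤ (1 + C) ^ e * x ^ e := by gcongr
    _ = ((1 + C) * x) ^ e := (mul_rpow (by linarith) hx.le).symm
    _ ≤ (x + y) ^ e := rpow_le_rpow_of_nonpos (by linarith) (by linarith) he0

theorem stmt16_general (a C' x y z : ℝ) (ha : 0 < a) (ha1 : a < 1)
    (hC2 : (a / 2) ^ (1 / (a - 1)) ≤ C')
    (hx : 0 < x) (hy : 0 < y) (hyx : y ≤ C' * x)
    (hzC : C' * (x + y) < z) :
    (1 / (2 * (1 + C'))) * x ^ (a - 1) ≤ (1 / 2) * (x + y) ^ (a - 1) ∧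
      (1 / 2) * (x + y) ^ (a - 1)
        ≤ (x + y) ^ (a - 1) - ∫ p in (0:ℝ)..1, (x + p * (y + z)) ^ (a - 1) := by
  have hxy : 0 < x + y := by linarith
  have hC : 0 < C' := (rpow_pos_of_pos (by positivity) _).trans_le hC2
  have hCa : C' ^ (a - 1) ≤ a / 2 := by
    rwa [one_div, rpow_inv_le_iff_of_neg (by positivity) hC (by linarith)] at hC2
  refine ⟨?_, ?_⟩
  · have h := inv_one_add_mul_rpow_le_rpow_add (e := a - 1) (by linarith) (by linarith) hC.le hx hy.le hyx
    rw [one_div, mul_inv, mul_assoc, ← one_div]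
    gcongr
  · have hyz : C' * (x + y) ≤ y + z := by linarith
    have hI := integral_rpow_sub_one_add_mul_le ha ha1.le hx.le
      ((mul_pos hC hxy).trans_le hyz)
    have hdecr : (y + z) ^ (a - 1) ≤ C' ^ (a - 1) * (x + y) ^ (a - 1) := by
      rw [← mul_rpow hC.le hxy.le]
      exact rpow_le_rpow_of_nonpos (by positivity) hyz (by linarith)
    have hhalf : (y + z) ^ (a - 1) / a ≤ (1 / 2) * (x + y) ^ (a - 1) := by
      rw [div_le_iff₀ ha]
      nlinarith [rpow_pos_of_pos hxy (a - 1)]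
    linarith

theorem stmt16 (a C' x y z : ℝ) (ha : 0 < a) (ha1 : a < 1)
    (hC1 : 1 ≤ C') (hC2 : (a / 2) ^ (1 / (a - 1)) ≤ C')
    (hx : 0 < x) (hy : 0 < y) (hz : 0 < z) (hyx : y ≤ C' * x)
    (hzC : C' * (x + y) < z) :
    (1 / (2 * (1 + C'))) * x ^ (a - 1) ≤ (1 / 2) * (x + y) ^ (a - 1) ∧
      (1 / 2) * (x + y) ^ (a - 1)
        ≤ (x + y) ^ (a - 1) - ∫ p in (0:ℝ)..1, (x + p * (y + z)) ^ (a - 1) :=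
  stmt16_general a C' x y z ha ha1 hC2 hx hy hyx hzC
end
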